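/- Let μ be a finite measure on a set S, s : S → S a measure-preserving involution, u : S → ℝ measurable and bounded with u ∘ s = -u and |u| < 1, and φ : S → ℝ nonnegative measurable with φ ∘ s = φ. Then ∫_S φ/(1+u) dμ = ∫_S φ/(1-u²) dμ + ∫_S (u·φ)/(u²-1) dμ, and in particular ∫_S φ/(1+u) dμ ≥ ∫_S φ dμ, with equality iff φ·u² = 0 μ-almost everywhere. -/

import Mathlib

open MeasureTheory

/-!
Since `1 - u² = (1 + u)(1 - u)`, the integrand `φ / (1 + u)` splits into the `s`-even part
`φ / (1 - u²)` and the `s`-odd part `u φ / (u² - 1)`. As `s` preserves `μ`, the odd part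
integrates to zero, so `∫ φ / (1 + u) = ∫ φ / (1 - u²)`; and the difference
`φ / (1 - u²) - φ = φ u² / (1 - u²)` is nonnegative, vanishing exactly where `φ u² = 0`.
-/

theorem MeasureTheory.MeasurePreserving.integral_eq_zero_of_comp_eq_neg
    {α G : Type*} [MeasurableSpace α] [NormedAddCommGroup G] [NormedSpace ℝ G]
    {μ : Measure α} {s : α → α} (hs : MeasurePreserving s μ μ) {f : α → G}
    (hf : ∀ x, f (s x) = -f x) :
    ∫ x, f x ∂μ = 0 := by
  by_cases hfi : Integrable f μ
  · have hcomp : ∫ x, f (s x) ∂μ = ∫ x, f x ∂μ := by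
      rw [← integral_map hs.aemeasurable (by rw [hs.map_eq]; exact hfi.aestronglyMeasurable),
        hs.map_eq]
    have : IsAddTorsionFree G := .of_isTorsionFree ℝ G
    simpa only [hf, integral_neg, neg_eq_self] using hcomp
  · exact integral_undef hfi

section OneSubSq

variable {K : Type*} [Field K] {a t : K}

theorem div_one_add_eq_div_one_sub_sq_add (h : 1 - t ^ 2 ≠ 0) :
    a / (1 + t) = a / (1 - t ^ 2) + t * a / (t ^ 2 - 1) := by
  have h₁ : 1 + t ≠ 0 := fun h₀ ↦ h (by linear_combination (1 - t) * h₀)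
  have h₂ : t ^ 2 - 1 ≠ 0 := fun h₀ ↦ h (by linear_combination -h₀)
  field_simp
  ring

theorem eq_div_one_sub_sq_iff_mul_sq_eq_zero (h : 1 - t ^ 2 ≠ 0) :
    a = a / (1 - t ^ 2) ↔ a * t ^ 2 = 0 := by
  rw [eq_div_iff h]
  constructor <;> intro h' <;> linear_combination -h'

end OneSubSq

theorem le_div_one_sub_sq {K : Type*} [Field K] [LinearOrder K] [IsStrictOrderedRing K]
    {a t : K} (ha : 0 ≤ a) (ht : |t| < 1) : a ≤ a / (1 - t ^ 2) := by
  rw [le_div_iff₀ (sub_pos.2 ((sq_lt_one_iff_abs_lt_one t).2 ht))]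
  nlinarith [sq_nonneg t]

theorem symbol_increase_core_general {S : Type*} [MeasurableSpace S] (μ : Measure S)
    (s : S → S) (hs : MeasurePreserving s μ μ)
    (u : S → ℝ) (hu_bdd : ∀ x, |u x| < 1)
    (hu_odd : ∀ x, u (s x) = - u x)
    (φ : S → ℝ) (hφ_nonneg : ∀ x, 0 ≤ φ x)
    (hφ_inv : ∀ x, φ (s x) = φ x)
    (hint₀ : Integrable φ μ)
    (hint₂ : Integrable (fun x => φ x / (1 - (u x) ^ 2)) μ)
    (hint₃ : Integrable (fun x => u x * φ x / ((u x) ^ 2 - 1)) μ) :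
    (∫ x, φ x / (1 + u x) ∂μ
        = (∫ x, φ x / (1 - (u x) ^ 2) ∂μ)
          + ∫ x, u x * φ x / ((u x) ^ 2 - 1) ∂μ) ∧
    (∫ x, φ x / (1 + u x) ∂μ ≥ ∫ x, φ x ∂μ) ∧
    ((∫ x, φ x / (1 + u x) ∂μ = ∫ x, φ x ∂μ) ↔
      (fun x => φ x * (u x) ^ 2) =ᵐ[μ] 0) := by
  have hne : ∀ x, 1 - u x ^ 2 ≠ 0 := fun x ↦
    (sub_pos.2 ((sq_lt_one_iff_abs_lt_one _).2 (hu_bdd x))).ne'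
  have hsplit : ∫ x, φ x / (1 + u x) ∂μ
      = (∫ x, φ x / (1 - u x ^ 2) ∂μ) + ∫ x, u x * φ x / (u x ^ 2 - 1) ∂μ := by
    rw [← integral_add hint₂ hint₃]
    exact integral_congr_ae (.of_forall fun x ↦ div_one_add_eq_div_one_sub_sq_add (hne x))
  have hodd : ∫ x, u x * φ x / (u x ^ 2 - 1) ∂μ = 0 :=
    hs.integral_eq_zero_of_comp_eq_neg fun x ↦ by rw [hu_odd, hφ_inv]; ring
  have heven : ∫ x, φ x / (1 + u x) ∂μ = ∫ x, φ x / (1 - u x ^ 2) ∂μ := by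
    rw [hsplit, hodd, add_zero]
  have hle : φ ≤ᵐ[μ] fun x ↦ φ x / (1 - u x ^ 2) :=
    .of_forall fun x ↦ le_div_one_sub_sq (hφ_nonneg x) (hu_bdd x)
  refine ⟨hsplit, heven ▸ integral_mono_ae hint₀ hint₂ hle, ?_⟩
  rw [heven, eq_comm, integral_eq_iff_of_ae_le hint₀ hint₂ hle]
  exact Filter.eventually_congr (.of_forall fun x ↦ eq_div_one_sub_sq_iff_mul_sq_eq_zero (hne x))

/-- measure-theoretic core of the symbol-increase lemma. For a finite
measure `μ`, a measure-preserving involution `s`, an odd function `u` with `|u| < 1`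
and an `s`-invariant nonnegative `φ`, one has
`∫ φ/(1+u) = ∫ φ/(1-u²) + ∫ uφ/(u²-1)`, and in particular `∫ φ/(1+u) ≥ ∫ φ`,
with equality iff `φ·u² = 0` almost everywhere. -/
theorem symbol_increase_core {S : Type*} [MeasurableSpace S] (μ : Measure S)
    [IsFiniteMeasure μ] (s : S → S) (hs : MeasurePreserving s μ μ)
    (hinv : ∀ x, s (s x) = x)
    (u : S → ℝ) (hu_meas : Measurable u) (hu_bdd : ∀ x, |u x| < 1)
    (hu_odd : ∀ x, u (s x) = - u x)
    (φ : S → ℝ) (hφ_meas : Measurable φ) (hφ_nonneg : ∀ x, 0 ≤ φ x)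
    (hφ_inv : ∀ x, φ (s x) = φ x)
    (hint₀ : Integrable φ μ)
    (hint₁ : Integrable (fun x => φ x / (1 + u x)) μ)
    (hint₂ : Integrable (fun x => φ x / (1 - (u x) ^ 2)) μ)
    (hint₃ : Integrable (fun x => u x * φ x / ((u x) ^ 2 - 1)) μ) :
    (∫ x, φ x / (1 + u x) ∂μ
        = (∫ x, φ x / (1 - (u x) ^ 2) ∂μ)
          + ∫ x, u x * φ x / ((u x) ^ 2 - 1) ∂μ) ∧
    (∫ x, φ x / (1 + u x) ∂μ ≥ ∫ x, φ x ∂μ) ∧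
    ((∫ x, φ x / (1 + u x) ∂μ = ∫ x, φ x ∂μ) ↔
      (fun x => φ x * (u x) ^ 2) =ᵐ[μ] 0) :=
  symbol_increase_core_general μ s hs u hu_bdd hu_odd φ hφ_nonneg hφ_inv hint₀ hint₂ hint₃
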